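/- Let X be a compact geodesic metric space with basepoint x₀, let μ be a Borel measure on X with 0 < μ(X) < ∞, and let s > 0 be a real number such that (i) every loop in X of length strictly less than s is null-homotopic rel its basepoint, and (ii) μ(closedBall(x,r)) ≥ 2r² for every x ∈ X and every real r with 0 < r ≤ s/2. For T > 0, let P'(T) denote the (finite) number of elements of π₁(X, x₀) admitting a representative loop based at x₀ of length at most T. Then for all real numbers α, β > 0 with 4α + β < 1/2, one has limsup_{T → ∞} (log P'(T))/T ≤ (1/(βs)) · log( μ(X)/(2α²s²) ). -/

import Mathlib

open Metric MeasureTheory Filter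

attribute [local instance] Path.Homotopic.setoid

/-- The length of a continuous path in a metric space: its total variation. -/
noncomputable def pathLength {X : Type*} [PseudoEMetricSpace X] {x y : X} (γ : Path x y) :
    ENNReal :=
  eVariationOn γ Set.univ

/-- A metric space is geodesic if any two points are joined by a path of length
equal to the distance between them. -/
def IsGeodesicSpace (X : Type*) [MetricSpace X] : Prop :=
  ∀ x y : X, ∃ γ : Path x y, pathLength γ = ENNReal.ofReal (dist x y)

/-- An element of the fundamental group, constructed from a homotopy class of loops. -/
noncomputable def FundamentalGroup.fromLoop {X : Type*} [TopologicalSpace X] {x : X}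
    (p : Path.Homotopic.Quotient x x) : FundamentalGroup X x :=
  FundamentalGroup.fromPath (X := TopCat.of X) p

/-!
Let `N` be a maximal `2αs`-separated subset of `X`. The balls of radius `αs` about its points are
disjoint and each has measure `≥ 2α²s²`, so `#N ≤ μ(X)/(2α²s²)`. Cut a loop of length
`≤ (n+1)βs` into `n + 1` arcs of length `≤ βs` and join every cut point by a geodesic to a point
of `N` at distance `≤ 2αs`. An arc, these two geodesics and the geodesic between the two net
points form a loop of length `≤ 4·2αs + 2βs < s`, hence null-homotopic. So the class of the loop
is that of a broken geodesic through `n` points of `N`, and `P'(T) ≤ #N ^ ⌊T/(βs)⌋`.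
-/

open Set unitInterval CategoryTheory FundamentalGroupoid
open scoped ENNReal NNReal

theorem Set.Icc.monotone_convexComb {a b : ℝ} {x y : Icc a b} (h : x ≤ y) :
    Monotone (Icc.convexComb x y) := by
  intro t t' htt'
  rw [← Subtype.coe_le_coe] at h htt' ⊢
  simp only [Icc.coe_convexComb]
  nlinarith

section PathLength

variable {X : Type*} [PseudoEMetricSpace X] {x y z : X}

theorem edist_le_pathLength (γ : Path x y) : edist x y ≤ pathLength γ := by
  simpa [pathLength] using eVariationOn.edist_le γ (mem_univ 0) (mem_univ 1)

theorem pathLength_symm (γ : Path x y) : pathLength γ.symm = pathLength γ := by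
  change eVariationOn (γ ∘ σ) univ = _
  rw [eVariationOn.comp_eq_of_antitoneOn _ _ (strictAnti_symm.antitone.antitoneOn _),
    image_univ_of_surjective symm_bijective.surjective, pathLength]

theorem pathLength_trans_le (γ : Path x y) (γ' : Path y z) :
    pathLength (γ.trans γ') ≤ pathLength γ + pathLength γ' := by
  let half : I := ⟨1 / 2, by norm_num, by norm_num⟩
  let double (t : I) : I := projIcc 0 1 zero_le_one (2 * t)
  let double' (t : I) : I := projIcc 0 1 zero_le_one (2 * t - 1)
  have hdouble : Monotone double := (monotone_projIcc _).comp fun _ _ h => by gcongr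
  have hdouble' : Monotone double' := (monotone_projIcc _).comp fun _ _ h => by gcongr
  rw [pathLength, ← Iic_union_Ici (a := half), eVariationOn.union _ isGreatest_Iic isLeast_Ici]
  gcongr
  · calc eVariationOn (γ.trans γ') (Iic half) = eVariationOn (γ ∘ double) (Iic half) := by
          refine eVariationOn.eq_of_eqOn fun t (ht : (t : ℝ) ≤ 1 / 2) => ?_
          rw [Path.trans_apply, dif_pos ht, Function.comp_apply]
          exact congrArg γ (projIcc_of_mem _ _).symm
      _ ≤ pathLength γ :=
          eVariationOn.comp_le_of_monotoneOn _ _ (hdouble.monotoneOn _) (mapsTo_univ _ _)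
  · calc eVariationOn (γ.trans γ') (Ici half) = eVariationOn (γ' ∘ double') (Ici half) := by
          refine eVariationOn.eq_of_eqOn fun t (ht : 1 / 2 ≤ (t : ℝ)) => ?_
          rcases ht.eq_or_lt with h | h
          · simp [double', Path.trans_apply, ← h]
          · rw [Path.trans_apply, dif_neg h.not_ge, Function.comp_apply]
            exact congrArg γ' (projIcc_of_mem _ _).symm
      _ ≤ pathLength γ' :=
          eVariationOn.comp_le_of_monotoneOn _ _ (hdouble'.monotoneOn _) (mapsTo_univ _ _)

theorem pathLength_subpath (γ : Path x y) {a b : I} (h : a ≤ b) :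
    pathLength (γ.subpath a b) = eVariationOn γ (Icc a b) := by
  rw [pathLength, Path.subpath, Path.coe_mk_mk,
    eVariationOn.comp_eq_of_monotoneOn _ _ ((Icc.monotone_convexComb h).monotoneOn _),
    image_univ, Path.range_subpathAux, uIcc_of_le h]

end PathLength

section Splitting

variable {X : Type*} [PseudoMetricSpace X] {x y : X}

theorem Path.continuous_variationOnFromTo (γ : Path x y) (hγ : pathLength γ ≠ ⊤) :
    Continuous (variationOnFromTo γ univ 0) := by
  have hγ' : LocallyBoundedVariationOn γ univ :=
    BoundedVariationOn.locallyBoundedVariationOn hγ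
  refine continuous_iff_continuousAt.2 fun t =>
    continuousAt_iff_continuous_left'_right'.2 ⟨?_, ?_⟩
  · simpa [ContinuousWithinAt] using variationOnFromTo.tendsto_left (mem_univ 0) (mem_univ t)
      hγ' ((γ.continuous.tendsto t).mono_left nhdsWithin_le_nhds)
  · simpa [ContinuousWithinAt] using variationOnFromTo.tendsto_right (mem_univ 0) (mem_univ t)
      hγ' ((γ.continuous.tendsto t).mono_left nhdsWithin_le_nhds)

theorem Path.exists_eVariationOn_Icc_eq (γ : Path x y) (hγ : pathLength γ ≠ ⊤) {ℓ : ℝ≥0∞}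
    (hℓ : ℓ ≤ pathLength γ) : ∃ m : I, eVariationOn γ (Icc 0 m) = ℓ := by
  have hℓ' : ℓ.toReal ∈ Icc (variationOnFromTo γ univ 0 0) (variationOnFromTo γ univ 0 1) := by
    rw [variationOnFromTo.self, variationOnFromTo.eq_of_le _ _ (nonneg' : (0 : I) ≤ 1),
      univ_inter, ← univ_eq_Icc]
    exact ⟨ENNReal.toReal_nonneg, ENNReal.toReal_mono hγ hℓ⟩
  obtain ⟨m, hm⟩ := intermediate_value_univ 0 1 (γ.continuous_variationOnFromTo hγ) hℓ'
  refine ⟨m, (ENNReal.toReal_eq_toReal_iff' ?_ (ne_top_of_le_ne_top hγ hℓ)).1 ?_⟩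
  · exact ne_top_of_le_ne_top hγ (eVariationOn.mono _ (subset_univ _))
  · rwa [variationOnFromTo.eq_of_le _ _ nonneg', univ_inter] at hm

theorem Path.exists_homotopic_trans_pathLength_le (γ : Path x y) (hγ : pathLength γ ≠ ⊤)
    (ℓ : ℝ≥0∞) : ∃ (z : X) (γ₁ : Path x z) (γ₂ : Path z y), γ.Homotopic (γ₁.trans γ₂) ∧
      pathLength γ₁ ≤ ℓ ∧ pathLength γ₂ ≤ pathLength γ - ℓ := by
  obtain ⟨m, hm⟩ := γ.exists_eVariationOn_Icc_eq hγ (min_le_right ℓ (pathLength γ))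
  have hadd : eVariationOn γ (Icc 0 m) + eVariationOn γ (Icc m 1) = pathLength γ := by
    simpa [pathLength, ← univ_eq_Icc] using
      eVariationOn.Icc_add_Icc γ nonneg' le_one' (mem_univ m)
  refine ⟨γ m, (γ.subpath 0 m).cast γ.source.symm rfl, (γ.subpath m 1).cast rfl γ.target.symm,
    ?_, ?_, ?_⟩
  · have h := (Path.Homotopy.subpathTransSubpath γ 0 m 1).symm
    rw [Path.subpath_zero_one] at h
    exact ⟨h⟩
  · exact (pathLength_subpath γ nonneg').trans_le (hm ▸ min_le_left _ _)
  · change pathLength (γ.subpath m 1) ≤ _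
    rw [pathLength_subpath γ le_one', ← tsub_min (b := ℓ), min_comm, ← hm, ← hadd,
      ENNReal.add_sub_cancel_left (hm ▸ ne_top_of_le_ne_top hγ (min_le_right _ _))]

end Splitting

/-- The systole is at least `s`. -/
def ShortLoopsNullhomotopic (X : Type*) [PseudoEMetricSpace X] (s : ℝ≥0∞) : Prop :=
  ∀ (x : X) (γ : Path x x), pathLength γ < s → γ.Homotopic (Path.refl x)

theorem ShortLoopsNullhomotopic.homotopic {X : Type*} [PseudoEMetricSpace X] {s : ℝ≥0∞}
    (hsys : ShortLoopsNullhomotopic X s) {x y : X} {γ γ' : Path x y}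
    (h : pathLength γ + pathLength γ' < s) : γ.Homotopic γ' := by
  have hloop : fromPath ⟦γ⟧ ≫ Groupoid.inv (fromPath ⟦γ'⟧) = 𝟙 (mk x) :=
    Quotient.sound <| hsys x _ <| (pathLength_trans_le _ _).trans_lt <| by rwa [pathLength_symm]
  rw [Groupoid.inv_eq_inv, comp_inv_eq_id] at hloop
  exact Quotient.exact hloop

section Geodesic

variable {X : Type*} [MetricSpace X]

noncomputable def IsGeodesicSpace.path (hX : IsGeodesicSpace X) (p q : X) : Path p q :=
  (hX p q).choose

theorem IsGeodesicSpace.pathLength_path (hX : IsGeodesicSpace X) (p q : X) :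
    pathLength (hX.path p q) = edist p q := by
  rw [edist_dist]
  exact (hX p q).choose_spec

noncomputable def IsGeodesicSpace.arrow (hX : IsGeodesicSpace X) (p q : X) : mk p ⟶ mk q :=
  fromPath ⟦hX.path p q⟧

open Classical in
noncomputable def IsGeodesicSpace.brokenGeodesicClasses (hX : IsGeodesicSpace X)
    (N : Finset X) : ℕ → (p q : X) → Finset (mk p ⟶ mk q)
  | 0, p, q => {hX.arrow p q}
  | n + 1, p, q => N.biUnion fun c =>
      (hX.brokenGeodesicClasses N n c q).image (hX.arrow p c ≫ ·)

theorem IsGeodesicSpace.card_brokenGeodesicClasses_le (hX : IsGeodesicSpace X) (N : Finset X)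
    (n : ℕ) (p q : X) : (hX.brokenGeodesicClasses N n p q).card ≤ N.card ^ n := by
  classical
  induction n generalizing p with
  | zero => simp [brokenGeodesicClasses]
  | succ n ih =>
    calc (hX.brokenGeodesicClasses N (n + 1) p q).card
        ≤ ∑ c ∈ N, (hX.brokenGeodesicClasses N n c q).card :=
          Finset.card_biUnion_le.trans (Finset.sum_le_sum fun c _ => Finset.card_image_le)
      _ ≤ ∑ _c ∈ N, N.card ^ n := Finset.sum_le_sum fun c _ => ih c
      _ = N.card ^ (n + 1) := by rw [Finset.sum_const, smul_eq_mul, pow_succ']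

def loopClassesOfLengthLE (x₀ : X) (L : ℝ≥0∞) : Set (FundamentalGroup X x₀) :=
  {g | ∃ γ : Path x₀ x₀, FundamentalGroup.fromLoop ⟦γ⟧ = g ∧ pathLength γ ≤ L}

namespace ShortLoopsNullhomotopic

variable {s D B : ℝ≥0∞}

theorem arrow_comp_arrow (hsys : ShortLoopsNullhomotopic X s) (hX : IsGeodesicSpace X)
    {p q : X} (h : 2 * edist p q < s) : hX.arrow p q ≫ hX.arrow q p = 𝟙 (mk p) := by
  refine Quotient.sound (hsys p _ ((pathLength_trans_le _ _).trans_lt ?_))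
  rwa [hX.pathLength_path, hX.pathLength_path, edist_comm q, ← two_mul]

theorem arrow_comp_comp_arrow (hsys : ShortLoopsNullhomotopic X s) (hX : IsGeodesicSpace X)
    {x y p q : X} (γ : Path x y) (hγ : pathLength γ ≤ B) (hxp : edist x p ≤ D)
    (hyq : edist y q ≤ D) (hDB : 4 * D + 2 * B < s) :
    hX.arrow p x ≫ fromPath ⟦γ⟧ ≫ hX.arrow y q = hX.arrow p q := by
  refine Quotient.sound (hsys.homotopic (lt_of_le_of_lt ?_ hDB))
  have hpq : edist p q ≤ edist p x + pathLength γ + edist y q :=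
    (edist_triangle4 p x y q).trans (by gcongr; exact edist_le_pathLength γ)
  rw [edist_comm] at hxp
  calc pathLength ((hX.path p x).trans (γ.trans (hX.path y q))) + pathLength (hX.path p q)
      ≤ (edist p x + (pathLength γ + edist y q)) + (edist p x + pathLength γ + edist y q) := by
        grw [pathLength_trans_le, pathLength_trans_le, hX.pathLength_path, hX.pathLength_path,
          hX.pathLength_path, hpq]
    _ ≤ (D + (B + D)) + (D + B + D) := by gcongr
    _ = 4 * D + 2 * B := by ring

theorem arrow_comp_comp_arrow_mem_brokenGeodesicClasses (hsys : ShortLoopsNullhomotopic X s)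
    (hX : IsGeodesicSpace X) {N : Finset X} (hN : ∀ z, ∃ c ∈ N, edist z c ≤ D) (hB : B ≠ ⊤)
    (hDB : 4 * D + 2 * B < s) (n : ℕ)
    {x y p q : X} (γ : Path x y) (hγ : pathLength γ ≤ (n + 1) * B) (hxp : edist x p ≤ D)
    (hyq : edist y q ≤ D) :
    hX.arrow p x ≫ fromPath ⟦γ⟧ ≫ hX.arrow y q ∈ hX.brokenGeodesicClasses N n p q := by
  classical
  induction n generalizing x p with
  | zero =>
    rw [hsys.arrow_comp_comp_arrow hX γ (by simpa using hγ) hxp hyq hDB]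
    exact Finset.mem_singleton_self _
  | succ n ih =>
    -- split off an initial arc `γ₁` of length `≤ B` and detour from its endpoint `z` to `c ∈ N`
    obtain ⟨z, γ₁, γ₂, hγ₁₂, hγ₁, hγ₂⟩ :=
      γ.exists_homotopic_trans_pathLength_le (ne_top_of_le_ne_top (by finiteness) hγ) B
    obtain ⟨c, hcN, hzc⟩ := hN z
    have hγ₂' : pathLength γ₂ ≤ (n + 1) * B :=
      hγ₂.trans (tsub_le_iff_right.2 (hγ.trans_eq (by push_cast; ring)))
    have hzcz : hX.arrow z c ≫ hX.arrow c z = 𝟙 (mk z) := by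
      refine hsys.arrow_comp_arrow hX (lt_of_le_of_lt (le_add_right ?_) hDB)
      grw [hzc]
      gcongr
      norm_num
    have hsplit : hX.arrow p x ≫ fromPath ⟦γ⟧ ≫ hX.arrow y q =
        hX.arrow p c ≫ hX.arrow c z ≫ fromPath ⟦γ₂⟧ ≫ hX.arrow y q := by
      calc hX.arrow p x ≫ fromPath ⟦γ⟧ ≫ hX.arrow y q
          = hX.arrow p x ≫ fromPath ⟦γ₁⟧ ≫ (hX.arrow z c ≫ hX.arrow c z) ≫ fromPath ⟦γ₂⟧ ≫
              hX.arrow y q := by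
            rw [hzcz, Category.id_comp, ← Category.assoc (fromPath ⟦γ₁⟧), Quotient.sound hγ₁₂]
            rfl
        _ = (hX.arrow p x ≫ fromPath ⟦γ₁⟧ ≫ hX.arrow z c) ≫ hX.arrow c z ≫ fromPath ⟦γ₂⟧ ≫
              hX.arrow y q := by simp only [Category.assoc]
        _ = _ := by rw [hsys.arrow_comp_comp_arrow hX γ₁ hγ₁ hxp hzc hDB]
    rw [hsplit]
    exact Finset.mem_biUnion.2 ⟨c, hcN, Finset.mem_image_of_mem _ (ih γ₂ hγ₂' hzc)⟩

theorem ncard_loopClassesOfLengthLE_le (hsys : ShortLoopsNullhomotopic X s)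
    (hX : IsGeodesicSpace X) {N : Finset X} (hN : ∀ z, ∃ c ∈ N, edist z c ≤ D) (hB : B ≠ ⊤)
    (hDB : 4 * D + 2 * B < s) (x₀ : X) {L : ℝ≥0∞} {n : ℕ}
    (hL : L ≤ (n + 1) * B) : (loopClassesOfLengthLE x₀ L).ncard ≤ N.card ^ n := by
  obtain ⟨p, -, hp⟩ := hN x₀
  let conj (w : mk p ⟶ mk p) : FundamentalGroup X x₀ :=
    Groupoid.inv (hX.arrow p x₀) ≫ w ≫ Groupoid.inv (hX.arrow x₀ p)
  calc _ ≤ (conj '' (hX.brokenGeodesicClasses N n p p : Set (mk p ⟶ mk p))).ncard := by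
        refine Set.ncard_le_ncard ?_ ((Finset.finite_toSet _).image _)
        rintro _ ⟨γ, rfl, hγ⟩
        refine ⟨_, hsys.arrow_comp_comp_arrow_mem_brokenGeodesicClasses hX hN hB hDB n γ
          (hγ.trans hL) hp hp, ?_⟩
        simp [conj, FundamentalGroup.fromLoop]
    _ ≤ (hX.brokenGeodesicClasses N n p p).card :=
        (Set.ncard_image_le (Finset.finite_toSet _)).trans_eq (Set.ncard_coe_finset _)
    _ ≤ N.card ^ n := hX.card_brokenGeodesicClasses_le N n p p

end ShortLoopsNullhomotopic

end Geodesic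

namespace Metric

variable {X : Type*} [PseudoMetricSpace X] [MeasurableSpace X] [OpensMeasurableSpace X]
  (μ : Measure X) {r : ℝ≥0} {v : ℝ≥0∞}

theorem IsSeparated.encard_mul_le_measure_univ (hball : ∀ x, v ≤ μ (closedBall x r))
    {C : Set X} (hC : IsSeparated (2 * r : ℝ≥0) C) : C.encard * v ≤ μ univ := by
  have hdisj : Pairwise (Function.onFun Disjoint fun c : C => closedBall (c : X) r) := by
    intro c c' hcc'
    refine closedBall_disjoint_closedBall ?_
    have h : ((2 * r : ℝ≥0) : ℝ≥0∞) < edist (c : X) c' :=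
      hC c.2 c'.2 (Subtype.coe_ne_coe.2 hcc')
    rw [edist_nndist, ENNReal.coe_lt_coe, ← NNReal.coe_lt_coe, coe_nndist] at h
    push_cast at h
    linarith
  calc C.encard * v = ∑' _ : C, v := (ENNReal.tsum_const v).symm
    _ ≤ ∑' c : C, μ (closedBall (c : X) r) := ENNReal.tsum_le_tsum fun c => hball c
    _ ≤ μ (⋃ c : C, closedBall (c : X) r) :=
        tsum_meas_le_meas_iUnion_of_disjoint μ (fun _ => measurableSet_closedBall) hdisj
    _ ≤ μ univ := measure_mono (subset_univ _)

theorem packingNumber_ne_top_of_le_measure_closedBall (hv : v ≠ 0) (hμ : μ univ ≠ ⊤)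
    (hball : ∀ x, v ≤ μ (closedBall x r)) : packingNumber (2 * r) (univ : Set X) ≠ ⊤ := by
  intro htop
  obtain ⟨n, hn⟩ := ENNReal.exists_nat_mul_gt hv hμ
  have : (n : ℕ∞) < packingNumber (2 * r) (univ : Set X) := htop ▸ ENat.natCast_lt_top n
  simp only [packingNumber, lt_iSup_iff] at this
  obtain ⟨C, -, hC, hnC⟩ := this
  refine hn.not_ge (le_trans ?_ (hC.encard_mul_le_measure_univ μ hball))
  gcongr
  exact_mod_cast hnC.le

theorem exists_finset_cover_card_mul_le_measure_univ (hv : v ≠ 0) (hμ : μ univ ≠ ⊤)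
    (hball : ∀ x, v ≤ μ (closedBall x r)) :
    ∃ N : Finset X, (∀ z, ∃ c ∈ N, edist z c ≤ 2 * r) ∧ N.card * v ≤ μ univ := by
  have hpack := packingNumber_ne_top_of_le_measure_closedBall μ hv hμ hball
  have hF := Set.encard_ne_top_iff.1 (encard_maximalSeparatedSet hpack ▸ hpack)
  refine ⟨hF.toFinset, fun z => ?_, ?_⟩
  · simpa using isCover_maximalSeparatedSet hpack (mem_univ z)
  · have h := (isSeparated_maximalSeparatedSet (A := univ)).encard_mul_le_measure_univ μ hball
    rwa [← hF.cast_ncard_eq, ENat.toENNReal_coe, Set.ncard_eq_toFinset_card _ hF] at h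

end Metric

theorem ENNReal.ofReal_le_floor_div_add_one_mul {b : ℝ} (hb : 0 < b) (T : ℝ) :
    ENNReal.ofReal T ≤ (⌊T / b⌋₊ + 1) * ENNReal.ofReal b := by
  calc ENNReal.ofReal T ≤ ENNReal.ofReal ((⌊T / b⌋₊ + 1) * b) :=
        ENNReal.ofReal_le_ofReal ((div_lt_iff₀ hb).1 (Nat.lt_floor_add_one _)).le
    _ = _ := by
        rw [ENNReal.ofReal_mul (by positivity)]
        norm_cast

theorem limsup_log_div_le_of_le_pow {u : ℝ → ℕ} {N : ℕ} {B : ℝ} (hB : 0 < B)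
    (hu : ∀ T, 0 < T → u T ≤ N ^ ⌊T / B⌋₊) :
    limsup (fun T => Real.log (u T) / T) atTop ≤ Real.log N / B := by
  have hbound : ∀ T, 0 < T → Real.log (u T) / T ≤ Real.log N / B := by
    intro T hT
    rw [div_le_div_iff₀ hT hB]
    rcases (u T).eq_zero_or_pos with h0 | hpos
    · simp only [h0, Nat.cast_zero, Real.log_zero, zero_mul]
      exact mul_nonneg (Real.log_natCast_nonneg N) hT.le
    calc Real.log (u T) * B ≤ Real.log ((N : ℝ) ^ ⌊T / B⌋₊) * B := by
          gcongr
          exact_mod_cast hu T hT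
      _ = ⌊T / B⌋₊ * Real.log N * B := by rw [Real.log_pow]
      _ ≤ T / B * Real.log N * B := by
          gcongr
          exact Nat.floor_le (by positivity)
      _ = Real.log N * T := by field_simp
  refine limsup_le_of_le ?_ ((eventually_gt_atTop 0).mono hbound)
  exact isCoboundedUnder_le_of_eventually_le atTop <| (eventually_gt_atTop 0).mono fun T hT =>
    div_nonneg (Real.log_natCast_nonneg _) hT.le

theorem entropy_bound_extremal_surface_general
    {X : Type*} [MetricSpace X]
    [MeasurableSpace X] [BorelSpace X]
    (hgeo : IsGeodesicSpace X) (x₀ : X) (μ : Measure X)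
    (hμfin : μ Set.univ < ⊤)
    (s : ℝ) (hs : 0 < s)
    (hsys : ∀ (x : X) (γ : Path x x), pathLength γ < ENNReal.ofReal s →
      γ.Homotopic (Path.refl x))
    (hball : ∀ (x : X) (r : ℝ), 0 < r → r ≤ s / 2 →
      ENNReal.ofReal (2 * r ^ 2) ≤ μ (closedBall x r))
    (P' : ℝ → ℕ)
    (hP' : ∀ T : ℝ, 0 < T → P' T =
      {g : FundamentalGroup X x₀ | ∃ γ : Path x₀ x₀,
        FundamentalGroup.fromLoop ⟦γ⟧ = g ∧ pathLength γ ≤ ENNReal.ofReal T}.ncard)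
    (α β : ℝ) (hα : 0 < α) (hβ : 0 < β) (hαβ : 4 * α + β < 1 / 2) :
    limsup (fun T : ℝ => Real.log (P' T) / T) atTop ≤
      (1 / (β * s)) * Real.log ((μ Set.univ).toReal / (2 * α ^ 2 * s ^ 2)) := by
  let r : ℝ≥0 := ⟨α * s, by positivity⟩
  obtain ⟨N, hcover, hcard⟩ := Metric.exists_finset_cover_card_mul_le_measure_univ μ (r := r)
    (ENNReal.ofReal_pos.2 (by positivity)).ne' hμfin.ne
    fun x => hball x (α * s) (by positivity) (by nlinarith)
  have hDB : 4 * (2 * (r : ℝ≥0∞)) + 2 * ENNReal.ofReal (β * s) < ENNReal.ofReal s := by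
    rw [← ENNReal.ofReal_coe_nnreal, ← ENNReal.ofReal_ofNat 4, ← ENNReal.ofReal_ofNat 2,
      ← ENNReal.ofReal_mul (by norm_num), ← ENNReal.ofReal_mul (by norm_num),
      ← ENNReal.ofReal_mul (by norm_num), ← ENNReal.ofReal_add (by positivity) (by positivity),
      ENNReal.ofReal_lt_ofReal_iff hs, show (r : ℝ) = α * s from rfl]
    norm_num
    nlinarith
  have hcount (T : ℝ) (hT : 0 < T) : P' T ≤ N.card ^ ⌊T / (β * s)⌋₊ :=
    hP' T hT ▸ ShortLoopsNullhomotopic.ncard_loopClassesOfLengthLE_le hsys hgeo hcover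
      ENNReal.ofReal_ne_top hDB x₀ (ENNReal.ofReal_le_floor_div_add_one_mul (by positivity) T)
  have hN : (N.card : ℝ) ≤ (μ univ).toReal / (2 * α ^ 2 * s ^ 2) := by
    have h := ENNReal.toReal_mono hμfin.ne hcard
    rw [ENNReal.toReal_mul, ENNReal.toReal_natCast, ENNReal.toReal_ofReal (by positivity)] at h
    rw [le_div_iff₀ (by positivity)]
    linarith
  obtain ⟨c, hc, -⟩ := hcover x₀
  have hN₀ : 0 < N.card := Finset.card_pos.2 ⟨c, hc⟩
  calc limsup (fun T : ℝ => Real.log (P' T) / T) atTop ≤ Real.log N.card / (β * s) :=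
        limsup_log_div_le_of_le_pow (by positivity) hcount
    _ ≤ _ := by
        rw [← one_div_mul_eq_div]
        gcongr

theorem entropy_bound_extremal_surface
    {X : Type*} [MetricSpace X] [CompactSpace X]
    [MeasurableSpace X] [BorelSpace X]
    (hgeo : IsGeodesicSpace X) (x₀ : X) (μ : Measure X)
    (hμpos : 0 < μ Set.univ) (hμfin : μ Set.univ < ⊤)
    (s : ℝ) (hs : 0 < s)
    (hsys : ∀ (x : X) (γ : Path x x), pathLength γ < ENNReal.ofReal s →
      γ.Homotopic (Path.refl x))
    (hball : ∀ (x : X) (r : ℝ), 0 < r → r ≤ s / 2 →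
      ENNReal.ofReal (2 * r ^ 2) ≤ μ (closedBall x r))
    (P' : ℝ → ℕ)
    (hP' : ∀ T : ℝ, 0 < T → P' T =
      {g : FundamentalGroup X x₀ | ∃ γ : Path x₀ x₀,
        FundamentalGroup.fromLoop ⟦γ⟧ = g ∧ pathLength γ ≤ ENNReal.ofReal T}.ncard)
    (α β : ℝ) (hα : 0 < α) (hβ : 0 < β) (hαβ : 4 * α + β < 1 / 2) :
    limsup (fun T : ℝ => Real.log (P' T) / T) atTop ≤
      (1 / (β * s)) * Real.log ((μ Set.univ).toReal / (2 * α ^ 2 * s ^ 2)) :=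
  entropy_bound_extremal_surface_general hgeo x₀ μ hμfin s hs hsys hball P' hP' α β hα hβ hαβ
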